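/- Let k be a field of characteristic 0. For all integers n ≥ 1 and N > n, one has θ^{⊗n}(δ^{(n−1)}(ω_N(𝟎))) = 𝟎 ⊗ 𝟎 ⊗ ⋯ ⊗ 𝟎 (n factors) and θ^{⊗n}(δ^{(n−1)}(ω_N(𝟏))) = 𝟏 ⊗ 𝟏 ⊗ ⋯ ⊗ 𝟏 (n factors) in C^{⊗n}. -/

import Mathlib

open Finsupp TensorProduct

noncomputable section

variable (k : Type) [Field k] [CharZero k]

/-- Underlying space of `Ω∨`: basis `α i ↔ Sum.inl i`, `β i ↔ Sum.inr i`. -/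
abbrev Om : Type := (ℕ ⊕ ℕ) →₀ k

/-- the basis vector `α_i` of `Ω∨` (degree 0, dual of `t^i`) -/
def av (i : ℕ) : Om k := Finsupp.single (Sum.inl i) 1

/-- the basis vector `β_i` of `Ω∨` (degree 1, dual of `t^i dt`) -/
def bv (i : ℕ) : Om k := Finsupp.single (Sum.inr i) 1

/-- the differential of `Ω∨`: `d β_i = (i+1) α_{i+1}`, `d α_i = 0`. -/
def dOm : Om k →ₗ[k] Om k :=
  Finsupp.lift (Om k) k (ℕ ⊕ ℕ) fun x =>
    match x with
    | Sum.inl _ => 0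
    | Sum.inr i => ((i : k) + 1) • av k (i + 1)

/-- Underlying space of `C = C_•([0,1])`: basis `𝟎 ↔ 0`, `𝟏 ↔ 1`, `𝟎𝟏 ↔ 2`. -/
abbrev Cc : Type := Fin 3 →₀ k

/-- the degree-0 basis vector `𝟎` of `C` -/
def c0 : Cc k := Finsupp.single 0 1
/-- the degree-0 basis vector `𝟏` of `C` -/
def c1 : Cc k := Finsupp.single 1 1
/-- the degree-1 basis vector `𝟎𝟏` of `C` -/
def c01 : Cc k := Finsupp.single 2 1

/-- the differential of `C`: `d 𝟎𝟏 = 𝟏 - 𝟎`, `d 𝟎 = d 𝟏 = 0`. -/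
def dC : Cc k →ₗ[k] Cc k :=
  Finsupp.lift (Cc k) k (Fin 3) fun x => if x = 2 then c1 k - c0 k else 0

/-- the projection `θ : Ω∨ → C`. -/
def θm : Om k →ₗ[k] Cc k :=
  Finsupp.lift (Cc k) k (ℕ ⊕ ℕ) fun x =>
    match x with
    | Sum.inl 0 => c0 k
    | Sum.inl 1 => c1 k - c0 k
    | Sum.inl _ => 0
    | Sum.inr 0 => c01 k
    | Sum.inr _ => 0

/-- the inclusion `ω_N : C → Ω∨`. -/
def ωm (N : ℕ) : Cc k →ₗ[k] Om k :=
  Finsupp.lift (Om k) k (Fin 3) fun x =>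
    if x = 0 then av k 0
    else if x = 1 then ∑ p ∈ Finset.range N, av k p
    else ∑ p ∈ Finset.range (N - 1), ((p : k) + 1)⁻¹ • bv k p

/-- the homotopy `K_N : Ω∨ → Ω∨`. -/
def Km (N : ℕ) : Om k →ₗ[k] Om k :=
  Finsupp.lift (Om k) k (ℕ ⊕ ℕ) fun x =>
    match x with
    | Sum.inl 0 => 0
    | Sum.inl 1 => - ∑ j ∈ Finset.Ico 1 (N - 1), ((j : k) + 1)⁻¹ • bv k j
    | Sum.inl (i + 2) => ((i : k) + 2)⁻¹ • bv k (i + 1)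
    | Sum.inr _ => 0

/-- the filtration `Ω∨_(N)`, spanned by the `α_j` with `j ≥ N` and the `β_j` with `j ≥ N - 1`. -/
def Filt (N : ℕ) : Submodule k (Om k) :=
  Submodule.span k
    ({x | ∃ j, N ≤ j ∧ x = av k j} ∪ {x | ∃ j, N ≤ j + 1 ∧ x = bv k j})

end

noncomputable section
variable (k : Type) [Field k] [CharZero k]

/-- the comultiplication `δ` on `Ω∨`:
`δ α_i = ∑_{a+b=i} α_a ⊗ α_b`, `δ β_i = ∑_{a+b=i} (β_a ⊗ α_b + α_a ⊗ β_b)`. -/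
def δm : Om k →ₗ[k] Om k ⊗[k] Om k :=
  Finsupp.lift (Om k ⊗[k] Om k) k (ℕ ⊕ ℕ) fun x =>
    match x with
    | Sum.inl i => ∑ ab ∈ Finset.HasAntidiagonal.antidiagonal i, av k ab.1 ⊗ₜ[k] av k ab.2
    | Sum.inr i => ∑ ab ∈ Finset.HasAntidiagonal.antidiagonal i,
        (bv k ab.1 ⊗ₜ[k] av k ab.2 + av k ab.1 ⊗ₜ[k] bv k ab.2)

/-- the counit `ε` on `Ω∨`: `ε α_0 = 1`, `ε α_i = 0` for `i ≥ 1`, `ε β_i = 0`. -/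
def εm : Om k →ₗ[k] k :=
  Finsupp.lift k k (ℕ ⊕ ℕ) fun x =>
    match x with
    | Sum.inl 0 => 1
    | _ => 0

end

noncomputable section
variable (k : Type) [Field k] [CharZero k]

/-- `OmPow n` is the (n+1)-fold tensor power `(Ω∨)^{⊗(n+1)}`. -/
def OmPow : ℕ → ModuleCat k
  | 0 => ModuleCat.of k (Om k)
  | n + 1 => ModuleCat.of k (Om k ⊗[k] (OmPow n))

/-- `CcPow n` is the (n+1)-fold tensor power `C^{⊗(n+1)}`. -/
def CcPow : ℕ → ModuleCat k
  | 0 => ModuleCat.of k (Cc k)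
  | n + 1 => ModuleCat.of k (Cc k ⊗[k] (CcPow n))

/-- `δiter n : Ω∨ → (Ω∨)^{⊗(n+1)}` is the `n`-fold iterated comultiplication
`δ^{(n)}`, defined recursively by `δ^{(0)} = id` and `δ^{(n+1)} = (id ⊗ δ^{(n)}) ∘ δ`. -/
def δiter : (n : ℕ) → (Om k →ₗ[k] OmPow k n)
  | 0 => LinearMap.id
  | n + 1 => (TensorProduct.map LinearMap.id (δiter n)) ∘ₗ δm k

/-- `θpow n : (Ω∨)^{⊗(n+1)} → C^{⊗(n+1)}` is the (n+1)-fold tensor power `θ^{⊗(n+1)}`. -/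
def θpow : (n : ℕ) → (OmPow k n →ₗ[k] CcPow k n)
  | 0 => θm k
  | n + 1 => TensorProduct.map (θm k) (θpow n)

/-- the pure tensor `x ⊗ x ⊗ ⋯ ⊗ x` (`n+1` factors) in `C^{⊗(n+1)}`. -/
def cpow (x : Cc k) : (n : ℕ) → CcPow k n
  | 0 => x
  | n + 1 => x ⊗ₜ[k] cpow x n

/-- the pure tensor `f 0 ⊗ f 1 ⊗ ⋯ ⊗ f n` in `C^{⊗(n+1)}`. -/
def tensorOf (f : ℕ → Cc k) : (n : ℕ) → CcPow k n
  | 0 => f 0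
  | n + 1 => f 0 ⊗ₜ[k] tensorOf (fun i => f (i + 1)) n

end

/-! Since `θ` kills every `α_i` with `i ≥ 2`, applying `θ` to the first tensor factor of
`δ(α_0 + ⋯ + α_N)` leaves only `𝟎 ⊗ (α_0 + ⋯ + α_N) + (𝟏 - 𝟎) ⊗ (α_0 + ⋯ + α_{N-1})`.
When both partial sums are long enough, induction turns each of them into `𝟏 ⊗ ⋯ ⊗ 𝟏`, and
`𝟎 ⊗ 𝟏 ⊗ ⋯ + (𝟏 - 𝟎) ⊗ 𝟏 ⊗ ⋯ = 𝟏 ⊗ 𝟏 ⊗ ⋯`. Every tensor factor shortens the partial sum by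
one, which is where `N > n` comes from. -/

open Finset

section

variable {k : Type} [Field k]

theorem ωm_c0 (N : ℕ) : ωm k N (c0 k) = av k 0 := by
  simp [ωm, c0]

theorem ωm_c1 (N : ℕ) : ωm k N (c1 k) = ∑ p ∈ range N, av k p := by
  simp [ωm, c1]

@[simp]
theorem θm_av_zero : θm k (av k 0) = c0 k := by
  simp [θm, av]

@[simp]
theorem θm_av_one : θm k (av k 1) = c1 k - c0 k := by
  simp [θm, av]

@[simp]
theorem θm_av_add_two (i : ℕ) : θm k (av k (i + 2)) = 0 := by
  simp [θm, av]

theorem δm_av (i : ℕ) : δm k (av k i) = ∑ ab ∈ antidiagonal i, av k ab.1 ⊗ₜ[k] av k ab.2 := by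
  simp [δm, av]

theorem θm_sum_range_add_two (N : ℕ) : θm k (∑ p ∈ range (N + 2), av k p) = c1 k := by
  rw [map_sum, sum_range_succ', sum_range_succ']
  simp

variable {M : Type} [AddCommGroup M] [Module k M] (f : Om k →ₗ[k] M)

theorem map_θm_δm_av_zero : map (θm k) f (δm k (av k 0)) = c0 k ⊗ₜ f (av k 0) := by
  simp [δm_av]

theorem map_θm_δm_av_succ (i : ℕ) :
    map (θm k) f (δm k (av k (i + 1))) =
      c0 k ⊗ₜ f (av k (i + 1)) + (c1 k - c0 k) ⊗ₜ f (av k i) := by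
  rw [δm_av, map_sum, Nat.sum_antidiagonal_succ]
  cases i with
  | zero => simp
  | succ j => simp [Nat.sum_antidiagonal_succ]

theorem map_θm_δm_sum_range_succ (N : ℕ) :
    map (θm k) f (δm k (∑ p ∈ range (N + 1), av k p)) =
      c0 k ⊗ₜ f (∑ p ∈ range (N + 1), av k p) + (c1 k - c0 k) ⊗ₜ f (∑ p ∈ range N, av k p) := by
  simp only [map_sum, tmul_sum]
  rw [sum_range_succ', sum_range_succ']
  simp only [map_θm_δm_av_succ, map_θm_δm_av_zero, sum_add_distrib]
  abel

theorem θpow_succ_δiter_succ (m : ℕ) (x : Om k) :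
    θpow k (m + 1) (δiter k (m + 1) x) = map (θm k) (θpow k m ∘ₗ δiter k m) (δm k x) := by
  change map (θm k) (θpow k m) (map LinearMap.id (δiter k m) (δm k x)) = _
  rw [TensorProduct.map_map, LinearMap.comp_id]

theorem θpow_δiter_av_zero (m : ℕ) : θpow k m (δiter k m (av k 0)) = cpow k (c0 k) m := by
  induction m with
  | zero => exact θm_av_zero
  | succ m ih => rw [θpow_succ_δiter_succ, map_θm_δm_av_zero, LinearMap.comp_apply, ih]; rfl

theorem θpow_δiter_sum_range (m N : ℕ) (hN : m + 2 ≤ N) :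
    θpow k m (δiter k m (∑ p ∈ range N, av k p)) = cpow k (c1 k) m := by
  induction m generalizing N with
  | zero =>
    obtain ⟨N, rfl⟩ := Nat.exists_eq_add_of_le' hN
    exact θm_sum_range_add_two N
  | succ m ih =>
    obtain ⟨N, rfl⟩ := Nat.exists_eq_add_of_le' (by omega : 1 ≤ N)
    rw [θpow_succ_δiter_succ, map_θm_δm_sum_range_succ, LinearMap.comp_apply,
      LinearMap.comp_apply, ih _ (by omega), ih _ (by omega), ← add_tmul, add_sub_cancel]
    rfl

end

theorem statement6_general (k : Type) [Field k] (n N : ℕ) (hn : 1 ≤ n) (hN : n < N) :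
    θpow k (n - 1) (δiter k (n - 1) (ωm k N (c0 k))) = cpow k (c0 k) (n - 1) ∧
    θpow k (n - 1) (δiter k (n - 1) (ωm k N (c1 k))) = cpow k (c1 k) (n - 1) := by
  rw [ωm_c0, ωm_c1]
  exact ⟨θpow_δiter_av_zero _, θpow_δiter_sum_range _ N (by omega)⟩

/-- For all `n ≥ 1` and `N > n`,
`θ^{⊗n}(δ^{(n-1)}(ω_N 𝟎)) = 𝟎 ⊗ ⋯ ⊗ 𝟎` and
`θ^{⊗n}(δ^{(n-1)}(ω_N 𝟏)) = 𝟏 ⊗ ⋯ ⊗ 𝟏` (`n` factors) in `C^{⊗n}`. -/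
theorem statement6 (k : Type) [Field k] [CharZero k] (n N : ℕ) (hn : 1 ≤ n) (hN : n < N) :
    θpow k (n - 1) (δiter k (n - 1) (ωm k N (c0 k))) = cpow k (c0 k) (n - 1) ∧
    θpow k (n - 1) (δiter k (n - 1) (ωm k N (c1 k))) = cpow k (c1 k) (n - 1) :=
  statement6_general k n N hn hN
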